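/- arXiv:1502.02873 — 2 statements merged into one kernel-verified Lean document; each statement's English description precedes it below -/
import Mathlib

section
/- Let X and Y be (k+1)-element singular subsets of the thin polar space Π_n with k+1 ≤ n−1. If some element of X \ Y is collinear to all elements of Y, then the distance between X and Y in the polar Grassmann graph Γ_k(n) equals |X| − |X ∩ Y|; if every element of X \ Y is non-collinear to some element of Y (and X ≠ Y), then the distance equals |X| − |X ∩ Y| + 1. -/
open Finset

/-- The point set J = {±1, …, ±n} of the thin polar space Π_n. -/
noncomputable def polarJ (n : ℕ) : Finset ℤ := (Finset.Icc (-(n : ℤ)) (n : ℤ)).erase 0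

/-- A subset of J is singular iff it contains no pair {i, -i}. -/
def Sing (n : ℕ) (S : Finset ℤ) : Prop := S ⊆ polarJ n ∧ ∀ i ∈ S, -i ∉ S

/-- Vertices of the polar Grassmann graph Γ_k(n): (k+1)-element singular subsets. -/
def Vert (n k : ℕ) := {S : Finset ℤ // Sing n S ∧ S.card = k + 1}

/-- The polar Grassmann graph Γ_k(n). -/
def Gr (n k : ℕ) : SimpleGraph (Vert n k) :=
  SimpleGraph.fromRel fun X Y => (X.1 ∩ Y.1).card = k ∧ Sing n (X.1 ∪ Y.1)

/-!
One exchange step replaces a single point of X, so d(X, Y) ≥ |X \ Y|. Since X \ Y and Y \ X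
have the same size, negation maps Y \ X onto X \ Y as soon as it maps into X \ Y; so if some
i ∈ X \ Y has -i ∉ Y, some y ∈ Y \ X has -y ∉ X, and trading a point of X \ Y (other than i,
unless it is the last one) for y gets one step closer while keeping the hypothesis: this gives
d(X, Y) = |X \ Y|. Otherwise Y ⊆ X ∪ -X, and no neighbour Z of X can acquire a point of Y \ X
(its negative lies in X), so d(X, Y) ≥ |X \ Y| + 1. Conversely X ∪ Y meets only |X| < n of the
pairs {±b}, so some point w with ±w ∉ X ∪ Y can be traded in first, after which the first case
applies.
-/

theorem SimpleGraph.dist_eq_of_length_le_of_le_length {V : Type*} {G : SimpleGraph V} {u v : V}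
    {m : ℕ} (p : G.Walk u v) (hp : p.length ≤ m) (h : ∀ q : G.Walk u v, m ≤ q.length) :
    G.dist u v = m := by
  obtain ⟨q, hq⟩ := p.reachable.exists_walk_length_eq_dist
  exact le_antisymm ((G.dist_le p).trans hp) (hq ▸ h q)

theorem Finset.neg_mem_of_forall_sdiff_neg_mem {α : Type*} [DecidableEq α] [InvolutiveNeg α]
    {X Y : Finset α} (hY : ∀ j ∈ Y, -j ∉ Y) (hXY : #X = #Y) (h : ∀ j ∈ Y \ X, -j ∈ X) :
    ∀ i ∈ X \ Y, -i ∈ Y := by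
  have himage : (Y \ X).image (fun j => -j) = X \ Y := by
    refine eq_of_subset_of_card_le ?_ ?_
    · simp only [image_subset_iff, mem_sdiff]
      exact fun j hj => ⟨h j (mem_sdiff.2 hj), hY j hj.1⟩
    · rw [card_image_of_injective _ neg_injective, card_sdiff_comm hXY]
  intro i hi
  obtain ⟨j, hj, rfl⟩ := mem_image.1 (himage ▸ hi)
  simpa using (mem_sdiff.1 hj).1

theorem exists_mem_polarJ_of_card_image_natAbs_lt {n : ℕ} {S : Finset ℤ}
    (hS : #(S.image Int.natAbs) < n) : ∃ w ∈ polarJ n, w ∉ S ∧ -w ∉ S := by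
  obtain ⟨b, hb⟩ : (Icc 1 n \ S.image Int.natAbs).Nonempty := by
    rw [← card_pos]
    have := le_card_sdiff (S.image Int.natAbs) (Icc 1 n)
    rw [Nat.card_Icc] at this
    omega
  obtain ⟨hbn, hbS⟩ := mem_sdiff.1 hb
  rw [mem_Icc] at hbn
  refine ⟨b, ?_, fun hw => hbS (mem_image.2 ⟨b, hw, rfl⟩),
    fun hw => hbS (mem_image.2 ⟨-b, hw, by simp⟩)⟩
  simp only [polarJ, mem_erase, mem_Icc]
  omega

variable {n k : ℕ}

theorem Sing.mono {S T : Finset ℤ} (hS : Sing n S) (hTS : T ⊆ S) : Sing n T :=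
  ⟨hTS.trans hS.1, fun i hi hni => hS.2 i (hTS hi) (hTS hni)⟩

theorem Sing.insert {S : Finset ℤ} {w : ℤ} (hS : Sing n S) (hw : w ∈ polarJ n) (hwS : -w ∉ S) :
    Sing n (insert w S) := by
  have hw0 : w ≠ 0 := (mem_erase.1 hw).1
  refine ⟨insert_subset hw hS.1, fun i hi hni => ?_⟩
  rcases mem_insert.1 hi with rfl | hi <;> rcases mem_insert.1 hni with hni | hni
  · omega
  · exact hwS hni
  · exact hwS (by rw [← hni, neg_neg]; exact hi)
  · exact hS.2 i hi hni

theorem Vert.eq_of_subset {X Y : Vert n k} (h : X.1 ⊆ Y.1) : X = Y :=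
  Subtype.ext (eq_of_subset_of_card_le h (by rw [X.2.2, Y.2.2]))

namespace Gr

theorem adj_iff {X Y : Vert n k} :
    (Gr n k).Adj X Y ↔ X ≠ Y ∧ #(X.1 ∩ Y.1) = k ∧ Sing n (X.1 ∪ Y.1) := by
  simp only [Gr, SimpleGraph.fromRel_adj, inter_comm Y.1, union_comm Y.1, or_self]

theorem card_sdiff_of_adj {X Z : Vert n k} (h : (Gr n k).Adj X Z) : #(X.1 \ Z.1) = 1 := by
  have := card_sdiff_add_card_inter X.1 Z.1
  have := X.2.2
  have := (adj_iff.1 h).2.1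
  omega

theorem card_sdiff_le_length {X Y : Vert n k} (p : (Gr n k).Walk X Y) :
    #(X.1 \ Y.1) ≤ p.length := by
  induction p with
  | nil => simp
  | @cons X Z Y h p ih =>
    calc #(X.1 \ Y.1) ≤ #(X.1 \ Z.1 ∪ Z.1 \ Y.1) := card_le_card (sdiff_triangle _ _ _)
      _ ≤ #(X.1 \ Z.1) + #(Z.1 \ Y.1) := card_union_le _ _
      _ ≤ (p.cons h).length := by rw [card_sdiff_of_adj h, SimpleGraph.Walk.length_cons]; omega

theorem exists_adj_insert_erase (X : Vert n k) {x w : ℤ} (hx : x ∈ X.1) (hw : w ∈ polarJ n)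
    (hwX : w ∉ X.1) (hnwX : -w ∉ X.1) :
    ∃ Z : Vert n k, Z.1 = insert w (X.1.erase x) ∧ (Gr n k).Adj X Z := by
  have hsing : Sing n (insert w X.1) := X.2.1.insert hw hnwX
  have hcard : #(insert w (X.1.erase x)) = k + 1 := by
    rw [card_insert_of_notMem (fun h => hwX (mem_of_mem_erase h)), card_erase_of_mem hx, X.2.2]
    omega
  refine ⟨⟨_, hsing.mono (insert_subset_insert w (erase_subset x X.1)), hcard⟩, rfl,
    adj_iff.2 ⟨fun h => hwX ?_, ?_, ?_⟩⟩
  · rw [h]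
    exact mem_insert_self w _
  · have hinter : X.1 ∩ insert w (X.1.erase x) = X.1.erase x := by
      ext a
      simp only [mem_inter, mem_insert, mem_erase]
      grind
    rw [hinter, card_erase_of_mem hx, X.2.2]
    omega
  · have hunion : X.1 ∪ insert w (X.1.erase x) = insert w X.1 := by
      ext a
      simp only [mem_union, mem_insert, mem_erase]
      grind
    rwa [hunion]

theorem exists_walk_length_le_card_sdiff {X Y : Vert n k}
    (h : X = Y ∨ ∃ i ∈ X.1 \ Y.1, -i ∉ Y.1) :
    ∃ p : (Gr n k).Walk X Y, p.length ≤ #(X.1 \ Y.1) := by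
  induction hm : #(X.1 \ Y.1) using Nat.strong_induction_on generalizing X with
  | _ m ih =>
  obtain rfl | ⟨i, hi, hiY⟩ := h
  · exact ⟨.nil, by simp⟩
  obtain ⟨y, hy, hyX⟩ : ∃ y ∈ Y.1 \ X.1, -y ∉ X.1 := by
    by_contra! hB
    exact hiY (neg_mem_of_forall_sdiff_neg_mem Y.2.1.2 (by rw [X.2.2, Y.2.2]) hB i hi)
  -- `i` must survive the exchange, unless the exchange already reaches `Y`
  obtain ⟨x, hx, hxi⟩ : ∃ x ∈ X.1 \ Y.1,
      (X.1 \ Y.1).erase x = ∅ ∨ i ∈ (X.1 \ Y.1).erase x := by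
    by_cases hrest : ((X.1 \ Y.1).erase i).Nonempty
    · obtain ⟨x, hx⟩ := hrest
      exact ⟨x, mem_of_mem_erase hx, Or.inr (mem_erase.2 ⟨(ne_of_mem_erase hx).symm, hi⟩)⟩
    · exact ⟨i, hi, Or.inl (not_nonempty_iff_eq_empty.1 hrest)⟩
  obtain ⟨Z, hZ, hXZ⟩ :=
    exists_adj_insert_erase X (mem_sdiff.1 hx).1 (Y.2.1.1 (mem_sdiff.1 hy).1) (mem_sdiff.1 hy).2 hyX
  have hZY : Z.1 \ Y.1 = (X.1 \ Y.1).erase x := by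
    rw [hZ]
    ext a
    simp only [mem_sdiff, mem_insert, mem_erase]
    grind
  have hlt : #(Z.1 \ Y.1) < m := hm ▸ hZY ▸ card_erase_lt_of_mem hx
  have hZ' : Z = Y ∨ ∃ i ∈ Z.1 \ Y.1, -i ∉ Y.1 := by
    rcases hxi with hempty | hiZ
    · exact Or.inl (Vert.eq_of_subset (sdiff_eq_empty_iff_subset.1 (hZY.trans hempty)))
    · exact Or.inr ⟨i, hZY ▸ hiZ, hiY⟩
  obtain ⟨q, hq⟩ := ih _ hlt hZ' rfl
  exact ⟨.cons hXZ q, by rw [SimpleGraph.Walk.length_cons]; omega⟩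

theorem card_sdiff_le_card_sdiff_of_adj {X Y Z : Vert n k} (hXZ : (Gr n k).Adj X Z)
    (hYX : ∀ j ∈ Y.1 \ X.1, -j ∈ X.1) : #(X.1 \ Y.1) ≤ #(Z.1 \ Y.1) := by
  have hZY : Z.1 ∩ Y.1 ⊆ X.1 ∩ Y.1 := by
    intro a ha
    obtain ⟨haZ, haY⟩ := mem_inter.1 ha
    by_contra haX
    have hnaX : -a ∈ X.1 := hYX a (mem_sdiff.2 ⟨haY, fun h => haX (mem_inter.2 ⟨h, haY⟩)⟩)
    exact (adj_iff.1 hXZ).2.2.2 a (mem_union_right _ haZ) (mem_union_left _ hnaX)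
  have := card_le_card hZY
  have := card_sdiff_add_card_inter X.1 Y.1
  have := card_sdiff_add_card_inter Z.1 Y.1
  have := X.2.2
  have := Z.2.2
  omega

theorem card_sdiff_add_one_le_length {X Y : Vert n k} (hne : X ≠ Y)
    (hYX : ∀ j ∈ Y.1 \ X.1, -j ∈ X.1) (p : (Gr n k).Walk X Y) :
    #(X.1 \ Y.1) + 1 ≤ p.length := by
  cases p with
  | nil => exact absurd rfl hne
  | cons h q =>
    have := card_sdiff_le_card_sdiff_of_adj h hYX
    have := card_sdiff_le_length q
    rw [SimpleGraph.Walk.length_cons]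
    omega

theorem exists_walk_length_le_card_sdiff_add_one (hk : k + 1 < n) {X Y : Vert n k}
    (hne : X ≠ Y) (hYX : ∀ j ∈ Y.1 \ X.1, -j ∈ X.1) :
    ∃ p : (Gr n k).Walk X Y, p.length ≤ #(X.1 \ Y.1) + 1 := by
  have himage : (X.1 ∪ Y.1).image Int.natAbs ⊆ X.1.image Int.natAbs := by
    intro b hb
    obtain ⟨a, ha, rfl⟩ := mem_image.1 hb
    by_cases haX : a ∈ X.1
    · exact mem_image_of_mem _ haX
    · have haY : a ∈ Y.1 := (mem_union.1 ha).resolve_left haX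
      exact mem_image.2 ⟨-a, hYX a (mem_sdiff.2 ⟨haY, haX⟩), Int.natAbs_neg a⟩
  obtain ⟨w, hw, hwXY, hnwXY⟩ := exists_mem_polarJ_of_card_image_natAbs_lt
    ((card_le_card himage).trans_lt (card_image_le.trans_lt (X.2.2 ▸ hk)))
  simp only [mem_union, not_or] at hwXY hnwXY
  obtain ⟨x, hx⟩ : (X.1 \ Y.1).Nonempty :=
    nonempty_iff_ne_empty.2 fun h => hne (Vert.eq_of_subset (sdiff_eq_empty_iff_subset.1 h))
  obtain ⟨Z, hZ, hXZ⟩ := exists_adj_insert_erase X (mem_sdiff.1 hx).1 hw hwXY.1 hnwXY.1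
  have hZY : Z.1 \ Y.1 = insert w ((X.1 \ Y.1).erase x) := by
    rw [hZ]
    ext a
    simp only [mem_sdiff, mem_insert, mem_erase]
    grind
  have hcard : #(Z.1 \ Y.1) = #(X.1 \ Y.1) := by
    rw [hZY, card_insert_of_notMem fun h => hwXY.1 (mem_sdiff.1 (mem_of_mem_erase h)).1,
      card_erase_add_one hx]
  obtain ⟨q, hq⟩ := exists_walk_length_le_card_sdiff
    (Or.inr ⟨w, hZY ▸ mem_insert_self w _, hnwXY.2⟩)
  exact ⟨.cons hXZ q, by rw [SimpleGraph.Walk.length_cons]; omega⟩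

end Gr

/-- Distance formula in Γ_k(n): if some element of X \ Y is collinear to all of Y then
d(X,Y) = |X| - |X ∩ Y|; if X ≠ Y and every element of X \ Y is non-collinear to some
element of Y then d(X,Y) = |X| - |X ∩ Y| + 1. -/
theorem stmt4 (n k : ℕ) (hk : k + 1 ≤ n - 1) (X Y : Vert n k) :
    ((∃ i ∈ X.1 \ Y.1, -i ∉ Y.1) →
      (Gr n k).dist X Y = X.1.card - (X.1 ∩ Y.1).card) ∧
    ((X ≠ Y ∧ ∀ i ∈ X.1 \ Y.1, -i ∈ Y.1) →
      (Gr n k).dist X Y = X.1.card - (X.1 ∩ Y.1).card + 1) := by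
  rw [inter_comm, ← card_sdiff]
  refine ⟨fun hA => ?_, fun ⟨hne, hB⟩ => ?_⟩
  · obtain ⟨p, hp⟩ := Gr.exists_walk_length_le_card_sdiff (Or.inr hA)
    exact SimpleGraph.dist_eq_of_length_le_of_le_length p hp Gr.card_sdiff_le_length
  · have hYX : ∀ j ∈ Y.1 \ X.1, -j ∈ X.1 :=
      neg_mem_of_forall_sdiff_neg_mem X.2.1.2 (by rw [X.2.2, Y.2.2]) hB
    obtain ⟨p, hp⟩ := Gr.exists_walk_length_le_card_sdiff_add_one (by omega) hne hYX
    exact SimpleGraph.dist_eq_of_length_le_of_le_length p hp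
      (Gr.card_sdiff_add_one_le_length hne hYX)
end

section
/- If three pairwise adjacent, distinct vertices S₁, S₂, S₃ of the polar Grassmann graph Γ_k(n) of the thin polar space Π_n (with 1 ≤ k ≤ n−3, vertices being (k+1)-element singular subsets) do not lie on a common line, then either |S₁ ∩ S₂ ∩ S₃| = k and |S₁ ∪ S₂ ∪ S₃| = k+3 (star-triangle), or |S₁ ∩ S₂ ∩ S₃| = k−1 and |S₁ ∪ S₂ ∪ S₃| = k+2 (top-triangle). -/
open Finset

/-!
Only the sizes matter. If three (k+1)-sets pairwise meet in k elements and t is the size of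
their common intersection, then A ∩ B and A ∩ C are two k-subsets of A meeting in t elements,
so 2k - t ≤ k + 1, i.e. t ∈ {k - 1, k}; and inclusion–exclusion gives |A ∪ B ∪ C| = t + 3.
-/

namespace Finset

variable {α : Type*} [DecidableEq α] (A B C : Finset α)

theorem card_union_union_add_card_inter_pairs :
    #(A ∪ B ∪ C) + #(A ∩ B) + #(A ∩ C) + #(B ∩ C) = #A + #B + #C + #(A ∩ B ∩ C) := by
  have hAB := card_union_add_card_inter A B
  have hABC := card_union_add_card_inter (A ∪ B) C
  have hpairs := card_union_add_card_inter (A ∩ C) (B ∩ C)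
  have hcommon : (A ∩ C) ∩ (B ∩ C) = A ∩ B ∩ C := by
    rw [inter_inter_inter_comm, inter_self]
  rw [union_inter_distrib_right] at hABC
  rw [hcommon] at hpairs
  omega

theorem card_inter_add_card_inter_le_card_add_card_inter_inter :
    #(A ∩ B) + #(A ∩ C) ≤ #A + #(A ∩ B ∩ C) := by
  have h := card_union_add_card_inter (A ∩ B) (A ∩ C)
  rw [← inter_inter_distrib_left, ← inter_assoc] at h
  have hsub : #((A ∩ B) ∪ (A ∩ C)) ≤ #A :=
    card_le_card (union_subset inter_subset_left inter_subset_left)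
  omega

variable {A B C} {m : ℕ}

theorem card_inter_inter_eq_or_of_pairwise_card_inter
    (hA : #A = m + 1) (hB : #B = m + 1) (hC : #C = m + 1)
    (hAB : #(A ∩ B) = m) (hAC : #(A ∩ C) = m) (hBC : #(B ∩ C) = m) :
    (#(A ∩ B ∩ C) = m ∧ #(A ∪ B ∪ C) = m + 3) ∨
    (#(A ∩ B ∩ C) = m - 1 ∧ #(A ∪ B ∪ C) = m + 2) := by
  have hunion := card_union_union_add_card_inter_pairs A B C
  have hlower := card_inter_add_card_inter_le_card_add_card_inter_inter A B C
  have hupper : #(A ∩ B ∩ C) ≤ #(A ∩ B) := card_le_card inter_subset_left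
  omega

end Finset

theorem stmt10_general (n k : ℕ)
    (S1 S2 S3 : Finset ℤ)
    (h1 : Sing n S1 ∧ S1.card = k + 1) (h2 : Sing n S2 ∧ S2.card = k + 1)
    (h3 : Sing n S3 ∧ S3.card = k + 1)
    (a12 : (S1 ∩ S2).card = k ∧ Sing n (S1 ∪ S2))
    (a13 : (S1 ∩ S3).card = k ∧ Sing n (S1 ∪ S3))
    (a23 : (S2 ∩ S3).card = k ∧ Sing n (S2 ∪ S3)) :
    ((S1 ∩ S2 ∩ S3).card = k ∧ (S1 ∪ S2 ∪ S3).card = k + 3) ∨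
    ((S1 ∩ S2 ∩ S3).card = k - 1 ∧ (S1 ∪ S2 ∪ S3).card = k + 2) :=
  card_inter_inter_eq_or_of_pairwise_card_inter h1.2 h2.2 h3.2 a12.1 a13.1 a23.1

/-- Triangle classification in Γ_k(n), 1 ≤ k ≤ n-3: a triangle (three pairwise adjacent
distinct vertices, not on a common line) is either a star-triangle or a top-triangle. -/
theorem stmt10 (n k : ℕ) (hk1 : 1 ≤ k) (hk2 : k + 3 ≤ n)
    (S1 S2 S3 : Finset ℤ)
    (h1 : Sing n S1 ∧ S1.card = k + 1) (h2 : Sing n S2 ∧ S2.card = k + 1)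
    (h3 : Sing n S3 ∧ S3.card = k + 1)
    (hne12 : S1 ≠ S2) (hne13 : S1 ≠ S3) (hne23 : S2 ≠ S3)
    (a12 : (S1 ∩ S2).card = k ∧ Sing n (S1 ∪ S2))
    (a13 : (S1 ∩ S3).card = k ∧ Sing n (S1 ∪ S3))
    (a23 : (S2 ∩ S3).card = k ∧ Sing n (S2 ∪ S3))
    (hline : ¬ ∃ S U : Finset ℤ, Sing n U ∧ S.card = k ∧ U.card = k + 2 ∧
      S ⊆ S1 ∧ S1 ⊆ U ∧ S ⊆ S2 ∧ S2 ⊆ U ∧ S ⊆ S3 ∧ S3 ⊆ U) :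
    ((S1 ∩ S2 ∩ S3).card = k ∧ (S1 ∪ S2 ∪ S3).card = k + 3) ∨
    ((S1 ∩ S2 ∩ S3).card = k - 1 ∧ (S1 ∪ S2 ∪ S3).card = k + 2) :=
  stmt10_general n k S1 S2 S3 h1 h2 h3 a12 a13 a23
end
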